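/- Let σ* = (x*, y*) be a Nash equilibrium of the game given by U, and suppose C > 0 satisfies the metric subregularity bound C·‖σ* − σ‖₂ ≤ ε(σ) for every σ ∈ Δ^n × Δ^m. Fix μ > 0 and define a sequence of profiles by choosing any σ^{r,1} ∈ Δ^n × Δ^m, letting σ^{*,1} be a saddle point of the SCCP with reference σ^{r,1}, and for each n ≥ 2 letting σ^{*,n} be a saddle point of the SCCP with reference σ^{*,n−1}. Then ‖σ* − σ^{*,n}‖₂ → 0 as n → ∞, i.e., the saddle-point sequence converges to the Nash equilibrium σ*. -/

import Mathlib

open Finset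

/-- Squared Euclidean norm of a vector. -/
noncomputable def sqnorm {k : ℕ} (v : Fin k → ℝ) : ℝ := ∑ i, (v i) ^ 2

/-- Euclidean norm of a concatenated profile vector in ℝ^(k+l). -/
noncomputable def pnorm {k l : ℕ} (v : Fin k → ℝ) (w : Fin l → ℝ) : ℝ :=
  Real.sqrt (sqnorm v + sqnorm w)

/-- Bilinear payoff xᵀUy. -/
def payoff {k l : ℕ} (U : Matrix (Fin k) (Fin l) ℝ) (x : Fin k → ℝ) (y : Fin l → ℝ) : ℝ :=
  ∑ i, ∑ j, x i * U i j * y j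

/-- Regularized SCCP objective G(x,y) = -xᵀUy + μ/2 ‖x - xʳ‖² - μ/2 ‖y - yʳ‖². -/
noncomputable def sccpObj {k l : ℕ} (U : Matrix (Fin k) (Fin l) ℝ) (μ : ℝ)
    (xr : Fin k → ℝ) (yr : Fin l → ℝ) (x : Fin k → ℝ) (y : Fin l → ℝ) : ℝ :=
  -(payoff U x y) + μ / 2 * sqnorm (x - xr) - μ / 2 * sqnorm (y - yr)

/-- (x̂, ŷ) is a saddle point of the SCCP with weight μ and reference (xr, yr). -/
def IsSaddle {k l : ℕ} (U : Matrix (Fin k) (Fin l) ℝ) (μ : ℝ)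
    (xr : Fin k → ℝ) (yr : Fin l → ℝ) (xh : Fin k → ℝ) (yh : Fin l → ℝ) : Prop :=
  xh ∈ stdSimplex ℝ (Fin k) ∧ yh ∈ stdSimplex ℝ (Fin l) ∧
  (∀ y ∈ stdSimplex ℝ (Fin l), sccpObj U μ xr yr xh y ≤ sccpObj U μ xr yr xh yh) ∧
  (∀ x ∈ stdSimplex ℝ (Fin k), sccpObj U μ xr yr xh yh ≤ sccpObj U μ xr yr x yh)

/-- (x*, y*) is a Nash equilibrium of the zero-sum game with payoff matrix U. -/
def IsNash {k l : ℕ} (U : Matrix (Fin k) (Fin l) ℝ)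
    (xs : Fin k → ℝ) (ys : Fin l → ℝ) : Prop :=
  xs ∈ stdSimplex ℝ (Fin k) ∧ ys ∈ stdSimplex ℝ (Fin l) ∧
  (∀ x ∈ stdSimplex ℝ (Fin k), payoff U x ys ≤ payoff U xs ys) ∧
  (∀ y ∈ stdSimplex ℝ (Fin l), payoff U xs ys ≤ payoff U xs y)

/-- Exploitability ε(σ) = max_{x'} x'ᵀUy - min_{y'} xᵀUy'. -/
noncomputable def exploit {k l : ℕ} (U : Matrix (Fin k) (Fin l) ℝ)
    (x : Fin k → ℝ) (y : Fin l → ℝ) : ℝ :=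
  sSup ((fun x' => payoff U x' y) '' stdSimplex ℝ (Fin k)) -
  sInf ((fun y' => payoff U x y') '' stdSimplex ℝ (Fin l))

/-- Transformed loss for the x-player: ℓ_x = -Uy + μ(x - xʳ). -/
noncomputable def lossX {k l : ℕ} (U : Matrix (Fin k) (Fin l) ℝ) (μ : ℝ)
    (xr : Fin k → ℝ) (x : Fin k → ℝ) (y : Fin l → ℝ) : Fin k → ℝ :=
  fun i => -(∑ j, U i j * y j) + μ * (x i - xr i)

/-- Transformed loss for the y-player: ℓ_y = Uᵀx + μ(y - yʳ). -/
noncomputable def lossY {k l : ℕ} (U : Matrix (Fin k) (Fin l) ℝ) (μ : ℝ)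
    (yr : Fin l → ℝ) (x : Fin k → ℝ) (y : Fin l → ℝ) : Fin l → ℝ :=
  fun j => (∑ i, U i j * x i) + μ * (y j - yr j)

/-- Immediate regret r = ⟨ℓ, p⟩·𝟏 - ℓ. -/
noncomputable def imRegret {k : ℕ} (ℓ : Fin k → ℝ) (p : Fin k → ℝ) : Fin k → ℝ :=
  fun i => (∑ i', ℓ i' * p i') - ℓ i

/-!
The saddle point σ̂ of the SCCP with reference σʳ satisfies the first-order conditions of a
proximal step. Tested against σ* they give ‖σ̂ - σʳ‖² + ‖σ* - σ̂‖² ≤ ‖σ* - σʳ‖²; tested against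
arbitrary profiles, with Cauchy–Schwarz and diam Δ ≤ √2, they give ε(σ̂) ≤ 2μ√2 ‖σ̂ - σʳ‖.
Metric subregularity then yields C²‖σ* - σ̂‖² ≤ 8μ² (‖σ* - σʳ‖² - ‖σ* - σ̂‖²), so every step
contracts the squared distance to σ* by the factor 8μ² / (C² + 8μ²) < 1.
-/

open Filter Topology Matrix

lemma nonneg_of_forall_mul_add_sq_mul_nonneg {a c : ℝ}
    (h : ∀ t : ℝ, 0 < t → t ≤ 1 → 0 ≤ t * a + t ^ 2 * c) : 0 ≤ a := by
  have hlim : Tendsto (fun t : ℝ => a + t * c) (𝓝[>] 0) (𝓝 a) := by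
    have hcont : Continuous fun t : ℝ => a + t * c := by fun_prop
    simpa using (hcont.tendsto 0).mono_left nhdsWithin_le_nhds
  refine ge_of_tendsto hlim ?_
  filter_upwards [Ioc_mem_nhdsGT one_pos] with t ⟨ht0, ht1⟩
  refine nonneg_of_mul_nonneg_right ?_ ht0
  linarith [h t ht0 ht1]

lemma tendsto_zero_of_le_mul_of_lt_one {u : ℕ → ℝ} {q : ℝ} (hu : ∀ n, 0 ≤ u n) (hq0 : 0 ≤ q)
    (hq1 : q < 1) (h : ∀ n, u (n + 1) ≤ q * u n) : Tendsto u atTop (𝓝 0) := by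
  refine squeeze_zero hu (fun n => le_geom hq0 n fun k _ => h k) ?_
  simpa using (tendsto_pow_atTop_nhds_zero_of_lt_one hq0 hq1).mul_const (u 0)

lemma sqnorm_eq_dotProduct {k : ℕ} (v : Fin k → ℝ) : sqnorm v = v ⬝ᵥ v := by
  simp only [sqnorm, dotProduct, sq]

lemma sqnorm_nonneg {k : ℕ} (v : Fin k → ℝ) : 0 ≤ sqnorm v :=
  sum_nonneg fun i _ => sq_nonneg (v i)

lemma sqnorm_add {k : ℕ} (u w : Fin k → ℝ) :
    sqnorm (u + w) = sqnorm u + sqnorm w + 2 * (u ⬝ᵥ w) := by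
  simp only [sqnorm_eq_dotProduct, add_dotProduct, dotProduct_add, dotProduct_comm w u]
  ring

lemma sqnorm_sub_le_two {k : ℕ} {x y : Fin k → ℝ}
    (hx : x ∈ stdSimplex ℝ (Fin k)) (hy : y ∈ stdSimplex ℝ (Fin k)) : sqnorm (x - y) ≤ 2 := by
  calc sqnorm (x - y) ≤ ∑ i, (x i + y i) := by
        refine sum_le_sum fun i _ => ?_
        have hx1 : x i ≤ 1 := hx.2 ▸ single_le_sum (fun j _ => hx.1 j) (mem_univ i)
        have hy1 : y i ≤ 1 := hy.2 ▸ single_le_sum (fun j _ => hy.1 j) (mem_univ i)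
        simp only [Pi.sub_apply]
        -- (xᵢ - yᵢ)² ≤ |xᵢ - yᵢ| ≤ xᵢ + yᵢ, as xᵢ, yᵢ ∈ [0, 1]
        nlinarith [hx.1 i, hy.1 i]
    _ = 2 := by rw [sum_add_distrib, hx.2, hy.2]; norm_num

lemma dotProduct_sub_le_of_mem_stdSimplex {k : ℕ} (v : Fin k → ℝ) {x x' : Fin k → ℝ}
    (hx : x ∈ stdSimplex ℝ (Fin k)) (hx' : x' ∈ stdSimplex ℝ (Fin k)) :
    v ⬝ᵥ (x' - x) ≤ √(2 * sqnorm v) := by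
  calc v ⬝ᵥ (x' - x) ≤ √(sqnorm v) * √(sqnorm (x' - x)) := Real.sum_mul_le_sqrt_mul_sqrt _ _ _
    _ ≤ √(sqnorm v) * √2 := by gcongr; exact sqnorm_sub_le_two hx' hx
    _ = √(2 * sqnorm v) := by rw [Real.sqrt_mul zero_le_two, mul_comm]

lemma payoff_eq_dotProduct {k l : ℕ} (U : Matrix (Fin k) (Fin l) ℝ) (x : Fin k → ℝ)
    (y : Fin l → ℝ) : payoff U x y = x ⬝ᵥ (U *ᵥ y) := by
  simp only [payoff, dotProduct, mulVec, mul_sum, mul_assoc]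

lemma payoff_neg_transpose {k l : ℕ} (U : Matrix (Fin k) (Fin l) ℝ) (x : Fin k → ℝ)
    (y : Fin l → ℝ) : payoff (-Uᵀ) y x = -payoff U x y := by
  simp only [payoff, ← sum_neg_distrib]
  rw [sum_comm]
  exact sum_congr rfl fun i _ => sum_congr rfl fun j _ => by
    rw [Matrix.neg_apply, transpose_apply]; ring

lemma sccpObj_neg_transpose {k l : ℕ} (U : Matrix (Fin k) (Fin l) ℝ) (μ : ℝ)
    (xr : Fin k → ℝ) (yr : Fin l → ℝ) (x : Fin k → ℝ) (y : Fin l → ℝ) :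
    sccpObj (-Uᵀ) μ yr xr y x = -sccpObj U μ xr yr x y := by
  simp only [sccpObj, payoff_neg_transpose]
  ring

lemma IsSaddle.neg_transpose {k l : ℕ} {U : Matrix (Fin k) (Fin l) ℝ} {μ : ℝ}
    {xr xh : Fin k → ℝ} {yr yh : Fin l → ℝ} (h : IsSaddle U μ xr yr xh yh) :
    IsSaddle (-Uᵀ) μ yr xr yh xh := by
  obtain ⟨hx, hy, hmax, hmin⟩ := h
  refine ⟨hy, hx, fun x hx' => ?_, fun y hy' => ?_⟩ <;>
    simp only [sccpObj_neg_transpose, neg_le_neg_iff]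
  exacts [hmin x hx', hmax y hy']

lemma sccpObj_add_smul_left {k l : ℕ} (U : Matrix (Fin k) (Fin l) ℝ) (μ : ℝ)
    (xr : Fin k → ℝ) (yr : Fin l → ℝ) (x d : Fin k → ℝ) (y : Fin l → ℝ) (t : ℝ) :
    sccpObj U μ xr yr (x + t • d) y = sccpObj U μ xr yr x y
      + t * (μ * ((x - xr) ⬝ᵥ d) - d ⬝ᵥ (U *ᵥ y)) + t ^ 2 * (μ / 2 * sqnorm d) := by
  have hsub : x + t • d - xr = (x - xr) + t • d := by abel
  simp only [sccpObj, payoff_eq_dotProduct, sqnorm_eq_dotProduct, hsub, add_dotProduct,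
    dotProduct_add, smul_dotProduct, dotProduct_smul, smul_eq_mul, dotProduct_comm d (x - xr)]
  ring

lemma exploit_le_of_forall {k l : ℕ} {U : Matrix (Fin k) (Fin l) ℝ} {x : Fin k → ℝ}
    {y : Fin l → ℝ} {M : ℝ} (hk : (stdSimplex ℝ (Fin k)).Nonempty)
    (hl : (stdSimplex ℝ (Fin l)).Nonempty)
    (h : ∀ x' ∈ stdSimplex ℝ (Fin k), ∀ y' ∈ stdSimplex ℝ (Fin l),
      payoff U x' y - payoff U x y' ≤ M) :
    exploit U x y ≤ M := by
  rw [exploit, sub_le_iff_le_add]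
  refine csSup_le (hk.image _) ?_
  rintro _ ⟨x', hx', rfl⟩
  rw [← sub_le_iff_le_add']
  refine le_csInf (hl.image _) ?_
  rintro _ ⟨y', hy', rfl⟩
  linarith [h x' hx' y' hy']

section Saddle

variable {k l : ℕ} {U : Matrix (Fin k) (Fin l) ℝ} {μ : ℝ} {xr xh : Fin k → ℝ}
  {yr yh : Fin l → ℝ}

lemma IsSaddle.payoff_sub_le_left (h : IsSaddle U μ xr yr xh yh) {x : Fin k → ℝ}
    (hx : x ∈ stdSimplex ℝ (Fin k)) :
    payoff U x yh - payoff U xh yh ≤ μ * ((xh - xr) ⬝ᵥ (x - xh)) := by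
  have hlin : payoff U x yh - payoff U xh yh = (x - xh) ⬝ᵥ (U *ᵥ yh) := by
    simp only [payoff_eq_dotProduct, sub_dotProduct]
  rw [hlin, ← sub_nonneg]
  refine nonneg_of_forall_mul_add_sq_mul_nonneg (c := μ / 2 * sqnorm (x - xh)) fun t ht0 ht1 => ?_
  have hmem := (convex_stdSimplex ℝ (Fin k)).add_smul_sub_mem h.1 hx ⟨ht0.le, ht1⟩
  have hmin := h.2.2.2 _ hmem
  rw [sccpObj_add_smul_left] at hmin
  linarith

lemma IsSaddle.payoff_sub_le_right (h : IsSaddle U μ xr yr xh yh) {y : Fin l → ℝ}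
    (hy : y ∈ stdSimplex ℝ (Fin l)) :
    payoff U xh yh - payoff U xh y ≤ μ * ((yh - yr) ⬝ᵥ (y - yh)) := by
  have := h.neg_transpose.payoff_sub_le_left hy
  rwa [payoff_neg_transpose, payoff_neg_transpose, neg_sub_neg] at this

lemma IsSaddle.payoff_sub_le (h : IsSaddle U μ xr yr xh yh) {x : Fin k → ℝ} {y : Fin l → ℝ}
    (hx : x ∈ stdSimplex ℝ (Fin k)) (hy : y ∈ stdSimplex ℝ (Fin l)) :
    payoff U x yh - payoff U xh y ≤ μ * ((xh - xr) ⬝ᵥ (x - xh) + (yh - yr) ⬝ᵥ (y - yh)) := by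
  linarith [h.payoff_sub_le_left hx, h.payoff_sub_le_right hy]

lemma IsSaddle.exploit_le (hμ : 0 ≤ μ) (h : IsSaddle U μ xr yr xh yh) :
    exploit U xh yh ≤ 2 * μ * √(2 * (sqnorm (xh - xr) + sqnorm (yh - yr))) := by
  set R := sqnorm (xh - xr) + sqnorm (yh - yr)
  refine exploit_le_of_forall ⟨xh, h.1⟩ ⟨yh, h.2.1⟩ fun x hx y hy => ?_
  have hxR : (xh - xr) ⬝ᵥ (x - xh) ≤ √(2 * R) :=
    (dotProduct_sub_le_of_mem_stdSimplex _ h.1 hx).trans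
      (Real.sqrt_le_sqrt (by linarith [sqnorm_nonneg (yh - yr)]))
  have hyR : (yh - yr) ⬝ᵥ (y - yh) ≤ √(2 * R) :=
    (dotProduct_sub_le_of_mem_stdSimplex _ h.2.1 hy).trans
      (Real.sqrt_le_sqrt (by linarith [sqnorm_nonneg (xh - xr)]))
  calc payoff U x yh - payoff U xh y
      ≤ μ * ((xh - xr) ⬝ᵥ (x - xh) + (yh - yr) ⬝ᵥ (y - yh)) := h.payoff_sub_le hx hy
    _ ≤ μ * (√(2 * R) + √(2 * R)) := by gcongr
    _ = 2 * μ * √(2 * R) := by ring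

variable {xs : Fin k → ℝ} {ys : Fin l → ℝ}

lemma IsSaddle.sqnorm_step_add_sqnorm_le (hμ : 0 < μ) (hNE : IsNash U xs ys)
    (h : IsSaddle U μ xr yr xh yh) :
    (sqnorm (xh - xr) + sqnorm (yh - yr)) + (sqnorm (xs - xh) + sqnorm (ys - yh))
      ≤ sqnorm (xs - xr) + sqnorm (ys - yr) := by
  have hP : 0 ≤ (xh - xr) ⬝ᵥ (xs - xh) + (yh - yr) ⬝ᵥ (ys - yh) := by
    have hgap : 0 ≤ payoff U xs yh - payoff U xh ys := by
      linarith [hNE.2.2.2 yh h.2.1, hNE.2.2.1 xh h.1]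
    exact nonneg_of_mul_nonneg_right (hgap.trans (h.payoff_sub_le hNE.1 hNE.2.1)) hμ
  rw [← sub_add_sub_cancel xs xh xr, ← sub_add_sub_cancel ys yh yr, sqnorm_add, sqnorm_add]
  linarith [dotProduct_comm (xs - xh) (xh - xr), dotProduct_comm (ys - yh) (yh - yr)]

lemma IsSaddle.sqnorm_sub_le_mul_of_subregular {C : ℝ} (hμ : 0 < μ) (hC : 0 ≤ C)
    (hNE : IsNash U xs ys) (h : IsSaddle U μ xr yr xh yh)
    (hMS : C * pnorm (xs - xh) (ys - yh) ≤ exploit U xh yh) :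
    sqnorm (xs - xh) + sqnorm (ys - yh)
      ≤ 8 * μ ^ 2 / (C ^ 2 + 8 * μ ^ 2) * (sqnorm (xs - xr) + sqnorm (ys - yr)) := by
  set A := sqnorm (xs - xr) + sqnorm (ys - yr)
  set B := sqnorm (xs - xh) + sqnorm (ys - yh)
  set R := sqnorm (xh - xr) + sqnorm (yh - yr)
  have hRBA : R + B ≤ A := h.sqnorm_step_add_sqnorm_le hμ hNE
  have hB : 0 ≤ B := add_nonneg (sqnorm_nonneg _) (sqnorm_nonneg _)
  have hR : 0 ≤ R := add_nonneg (sqnorm_nonneg _) (sqnorm_nonneg _)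
  have hCB : C * √B ≤ 2 * μ * √(2 * R) := hMS.trans (h.exploit_le hμ.le)
  have hsq : C ^ 2 * B ≤ 8 * μ ^ 2 * R := by
    have := pow_le_pow_left₀ (by positivity) hCB 2
    rw [mul_pow, mul_pow, Real.sq_sqrt hB, Real.sq_sqrt (by positivity)] at this
    linarith
  rw [div_mul_eq_mul_div, le_div_iff₀ (by positivity)]
  nlinarith

end Saddle

theorem saddle_sequence_tendsto_nash_general
    {n m : ℕ}
    (U : Matrix (Fin n) (Fin m) ℝ) (μ : ℝ) (hμ : 0 < μ)
    (xs : Fin n → ℝ) (ys : Fin m → ℝ) (hNE : IsNash U xs ys)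
    (C : ℝ) (hC : 0 < C)
    (hMS : ∀ x ∈ stdSimplex ℝ (Fin n), ∀ y ∈ stdSimplex ℝ (Fin m),
      C * pnorm (xs - x) (ys - y) ≤ exploit U x y)
    (sx : ℕ → Fin n → ℝ) (sy : ℕ → Fin m → ℝ)
    (hsn : ∀ k : ℕ, 2 ≤ k → IsSaddle U μ (sx (k - 1)) (sy (k - 1)) (sx k) (sy k)) :
    Filter.Tendsto (fun k : ℕ => pnorm (xs - sx k) (ys - sy k)) Filter.atTop (nhds 0) := by
  set q := 8 * μ ^ 2 / (C ^ 2 + 8 * μ ^ 2)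
  have hq1 : q < 1 := (div_lt_one (by positivity)).2 (lt_add_of_pos_left _ (by positivity))
  set D : ℕ → ℝ := fun k => sqnorm (xs - sx (k + 1)) + sqnorm (ys - sy (k + 1))
  have hstep : ∀ k, D (k + 1) ≤ q * D k := fun k => by
    have hsad : IsSaddle U μ (sx (k + 1)) (sy (k + 1)) (sx (k + 2)) (sy (k + 2)) :=
      hsn (k + 2) (by omega)
    exact hsad.sqnorm_sub_le_mul_of_subregular hμ hC.le hNE (hMS _ hsad.1 _ hsad.2.1)
  have hD : Tendsto D atTop (𝓝 0) :=
    tendsto_zero_of_le_mul_of_lt_one (fun k => add_nonneg (sqnorm_nonneg _) (sqnorm_nonneg _))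
      (by positivity) hq1 hstep
  rw [← tendsto_add_atTop_iff_nat 1, ← Real.sqrt_zero]
  exact hD.sqrt

/-- Asymptotic convergence of the SCCP saddle-point sequence to the Nash equilibrium. -/
theorem saddle_sequence_tendsto_nash
    {n m : ℕ} (hn : 0 < n) (hm : 0 < m)
    (U : Matrix (Fin n) (Fin m) ℝ) (μ : ℝ) (hμ : 0 < μ)
    (xs : Fin n → ℝ) (ys : Fin m → ℝ) (hNE : IsNash U xs ys)
    (C : ℝ) (hC : 0 < C)
    (hMS : ∀ x ∈ stdSimplex ℝ (Fin n), ∀ y ∈ stdSimplex ℝ (Fin m),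
      C * pnorm (xs - x) (ys - y) ≤ exploit U x y)
    (xr1 : Fin n → ℝ) (yr1 : Fin m → ℝ)
    (hxr1 : xr1 ∈ stdSimplex ℝ (Fin n)) (hyr1 : yr1 ∈ stdSimplex ℝ (Fin m))
    (sx : ℕ → Fin n → ℝ) (sy : ℕ → Fin m → ℝ)
    (hs1 : IsSaddle U μ xr1 yr1 (sx 1) (sy 1))
    (hsn : ∀ k : ℕ, 2 ≤ k → IsSaddle U μ (sx (k - 1)) (sy (k - 1)) (sx k) (sy k)) :
    Filter.Tendsto (fun k : ℕ => pnorm (xs - sx k) (ys - sy k)) Filter.atTop (nhds 0) :=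
  saddle_sequence_tendsto_nash_general U μ hμ xs ys hNE C hC hMS sx sy hsn
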